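/- Let Q ∈ ℂ^{m×n} (n < m) have orthonormal columns, z ∈ ℂ^m, u = QQ*z ≠ 0, v = (I − QQ*)z ≠ 0, and ν = ‖z‖. Then λ⁺ = (1 + ν² + √(1 + ν⁴ + 2ν² − 4‖v‖²))/2 and λ⁻ = (1 + ν² − √(1 + ν⁴ + 2ν² − 4‖v‖²))/2 are eigenvalues of QQ* + zz*, with corresponding eigenvectors of the form αu + v for suitable α ∈ ℂ. -/

import Mathlib

open Matrix

/-!
With `P = Q Qᴴ` the orthogonal projection onto `Range Q`, the plane spanned by `u = P z` and
`v = z - P z` is invariant under `P + z zᴴ`: writing `a = ‖u‖²`, `b = ‖v‖²`,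
`(P + z zᴴ)(α u + v) = α u + (α a + b)(u + v)`.
This equals `λ (α u + v)` exactly when `α a + b = λ` and `α + λ = λ α`; eliminating
`α = λ / (λ - 1)` leaves `λ² - (1 + a + b) λ + b = 0`, whose roots are `λ±` since
`ν² = a + b`.
-/

section Projection

variable {R ι : Type*} [Fintype ι]

theorem isIdempotentElem_mul_conjTranspose_self {κ : Type*} [Semiring R] [StarRing R]
    [Fintype κ] [DecidableEq κ] {Q : Matrix ι κ R} (hQ : Qᴴ * Q = 1) :
    IsIdempotentElem (Q * Qᴴ) := by
  rw [IsIdempotentElem, Matrix.mul_assoc, ← Matrix.mul_assoc Qᴴ, hQ, Matrix.one_mul]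

theorem IsIdempotentElem.mulVec_mulVec_self [Semiring R] {P : Matrix ι ι R}
    (hP : IsIdempotentElem P) (z : ι → R) : P *ᵥ (P *ᵥ z) = P *ᵥ z := by
  rw [mulVec_mulVec, hP.eq]

theorem IsIdempotentElem.mulVec_sub_mulVec_self [Ring R] {P : Matrix ι ι R}
    (hP : IsIdempotentElem P) (z : ι → R) : P *ᵥ (z - P *ᵥ z) = 0 := by
  rw [mulVec_sub, hP.mulVec_mulVec_self, sub_self]

theorem Matrix.IsHermitian.star_dotProduct_eq_zero_of_mulVec [Semiring R] [StarRing R]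
    {P : Matrix ι ι R} (hP : P.IsHermitian) {x y : ι → R} (hx : P *ᵥ x = x)
    (hy : P *ᵥ y = 0) : star x ⬝ᵥ y = 0 := by
  rw [← hx, star_mulVec, ← dotProduct_mulVec, hP.eq, hy, dotProduct_zero]

end Projection

section RCLike

open scoped ComplexOrder

variable {𝕜 ι : Type*} [RCLike 𝕜] [Fintype ι]

theorem star_dotProduct_self_eq_sum_norm_sq (x : ι → 𝕜) :
    star x ⬝ᵥ x = ((∑ i, ‖x i‖ ^ 2 : ℝ) : 𝕜) := by
  simp [dotProduct, RCLike.conj_mul]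

theorem sum_norm_sq_add_of_star_dotProduct_eq_zero {u v : ι → 𝕜} (h : star u ⬝ᵥ v = 0) :
    ∑ i, ‖(u + v) i‖ ^ 2 = ∑ i, ‖u i‖ ^ 2 + ∑ i, ‖v i‖ ^ 2 := by
  have h' : star v ⬝ᵥ u = 0 := by rw [star_dotProduct, h, star_zero]
  have := star_dotProduct_self_eq_sum_norm_sq (u + v)
  rw [star_add, add_dotProduct, dotProduct_add, dotProduct_add, h, h', add_zero, zero_add,
    star_dotProduct_self_eq_sum_norm_sq, star_dotProduct_self_eq_sum_norm_sq] at this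
  exact_mod_cast this.symm

theorem Matrix.IsHermitian.exists_eigenvector_add_vecMulVec {P : Matrix ι ι 𝕜}
    (hP : P.IsHermitian) {u v : ι → 𝕜} (hu : P *ᵥ u = u) (hv : P *ᵥ v = 0) (hu0 : u ≠ 0)
    (hv0 : v ≠ 0) {lam : ℝ}
    (hlam : lam ^ 2 - (1 + ∑ i, ‖(u + v) i‖ ^ 2) * lam + ∑ i, ‖v i‖ ^ 2 = 0) :
    ∃ α : 𝕜, α • u + v ≠ 0 ∧
      (P + vecMulVec (u + v) (star (u + v))) *ᵥ (α • u + v) =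
        (lam : 𝕜) • (α • u + v) := by
  set a := ∑ i, ‖u i‖ ^ 2
  set b := ∑ i, ‖v i‖ ^ 2
  have huv : star u ⬝ᵥ v = 0 := hP.star_dotProduct_eq_zero_of_mulVec hu hv
  have hvu : star v ⬝ᵥ u = 0 := by rw [star_dotProduct, huv, star_zero]
  rw [sum_norm_sq_add_of_star_dotProduct_eq_zero huv] at hlam
  have ha : (a : 𝕜) ≠ 0 := by
    rw [← star_dotProduct_self_eq_sum_norm_sq]
    exact dotProduct_star_self_eq_zero.not.mpr hu0
  have hlam𝕜 : (lam : 𝕜) ^ 2 - (1 + a + b) * lam + b = 0 := by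
    exact_mod_cast (by linear_combination hlam : lam ^ 2 - (1 + a + b) * lam + b = 0)
  have hlam1 : (lam : 𝕜) - 1 ≠ 0 := fun h ↦
    ha (by linear_combination (lam - a - b) * h - hlam𝕜)
  set α : 𝕜 := lam / (lam - 1)
  have hαu : α + lam = lam * α := by simp only [α]; field_simp; ring
  have hαv : α * a + b = lam := by simp only [α]; field_simp; linear_combination -hlam𝕜
  refine ⟨α, fun h ↦ hv0 ?_, ?_⟩
  · have hαu0 : α • u = 0 := by
      simpa [mulVec_add, mulVec_smul, hu, hv] using congr_arg (P *ᵥ ·) h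
    simpa [hαu0] using h
  · have hz : star (u + v) ⬝ᵥ (α • u + v) = lam := by
      simp only [star_add, add_dotProduct, dotProduct_add, dotProduct_smul, huv, hvu,
        star_dotProduct_self_eq_sum_norm_sq, smul_eq_mul]
      linear_combination hαv
    rw [add_mulVec, mulVec_add, mulVec_smul, hu, hv, add_zero, vecMulVec_mulVec,
      op_smul_eq_smul, hz]
    linear_combination (norm := module) hαu • u

end RCLike

theorem stmt6_general {m n : ℕ} (Q : Matrix (Fin m) (Fin n) ℂ)
    (hQ : Qᴴ * Q = 1) (z u v : Fin m → ℂ)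
    (hu : u = (Q * Qᴴ) *ᵥ z) (hv : v = z - u)
    (hu0 : u ≠ 0) (hv0 : v ≠ 0)
    (ν : ℝ) (hν : ν = Real.sqrt (∑ i, ‖z i‖ ^ 2)) :
    (∃ α : ℂ, α • u + v ≠ 0 ∧
      (Q * Qᴴ + vecMulVec z (star z)) *ᵥ (α • u + v)
        = (((1 + ν ^ 2 + Real.sqrt (1 + ν ^ 4 + 2 * ν ^ 2 - 4 * ∑ i, ‖v i‖ ^ 2)) / 2 : ℝ) : ℂ)
            • (α • u + v)) ∧
    (∃ α : ℂ, α • u + v ≠ 0 ∧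
      (Q * Qᴴ + vecMulVec z (star z)) *ᵥ (α • u + v)
        = (((1 + ν ^ 2 - Real.sqrt (1 + ν ^ 4 + 2 * ν ^ 2 - 4 * ∑ i, ‖v i‖ ^ 2)) / 2 : ℝ) : ℂ)
            • (α • u + v)) := by
  have hP := isIdempotentElem_mul_conjTranspose_self hQ
  have hPH : (Q * Qᴴ).IsHermitian := isHermitian_mul_conjTranspose_self Q
  have hPu : (Q * Qᴴ) *ᵥ u = u := hu ▸ hP.mulVec_mulVec_self z
  have hPv : (Q * Qᴴ) *ᵥ v = 0 := hv ▸ hu ▸ hP.mulVec_sub_mulVec_self z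
  obtain rfl : z = u + v := by rw [hv, add_sub_cancel]
  have hν2 : ν ^ 2 = ∑ i, ‖(u + v) i‖ ^ 2 := by rw [hν, Real.sq_sqrt (by positivity)]
  have hpyth := sum_norm_sq_add_of_star_dotProduct_eq_zero
    (hPH.star_dotProduct_eq_zero_of_mulVec hPu hPv)
  have hdisc : 0 ≤ 1 + ν ^ 4 + 2 * ν ^ 2 - 4 * ∑ i, ‖v i‖ ^ 2 := by
    have ha : 0 ≤ ∑ i, ‖u i‖ ^ 2 := by positivity
    rw [show ν ^ 4 = (ν ^ 2) ^ 2 by ring, hν2, hpyth]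
    nlinarith [sq_nonneg (1 - ∑ i, ‖v i‖ ^ 2)]
  set r := √(1 + ν ^ 4 + 2 * ν ^ 2 - 4 * ∑ i, ‖v i‖ ^ 2)
  have hr : r ^ 2 = 1 + ν ^ 4 + 2 * ν ^ 2 - 4 * ∑ i, ‖v i‖ ^ 2 := Real.sq_sqrt hdisc
  constructor
  · refine hPH.exists_eigenvector_add_vecMulVec hPu hPv hu0 hv0 (lam := (1 + ν ^ 2 + r) / 2) ?_
    rw [← hν2]
    linear_combination hr / 4
  · refine hPH.exists_eigenvector_add_vecMulVec hPu hPv hu0 hv0 (lam := (1 + ν ^ 2 - r) / 2) ?_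
    rw [← hν2]
    linear_combination hr / 4

/-- `λ⁺ = (1+ν²+√(1+ν⁴+2ν²−4‖v‖²))/2` and
`λ⁻ = (1+ν²−√(1+ν⁴+2ν²−4‖v‖²))/2` are eigenvalues of `Q Qᴴ + z zᴴ`,
with eigenvectors of the form `αu + v`. -/
theorem stmt6 {m n : ℕ} (hmn : n < m) (Q : Matrix (Fin m) (Fin n) ℂ)
    (hQ : Qᴴ * Q = 1) (z u v : Fin m → ℂ)
    (hu : u = (Q * Qᴴ) *ᵥ z) (hv : v = z - u)
    (hu0 : u ≠ 0) (hv0 : v ≠ 0)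
    (ν : ℝ) (hν : ν = Real.sqrt (∑ i, ‖z i‖ ^ 2)) :
    (∃ α : ℂ, α • u + v ≠ 0 ∧
      (Q * Qᴴ + vecMulVec z (star z)) *ᵥ (α • u + v)
        = (((1 + ν ^ 2 + Real.sqrt (1 + ν ^ 4 + 2 * ν ^ 2 - 4 * ∑ i, ‖v i‖ ^ 2)) / 2 : ℝ) : ℂ)
            • (α • u + v)) ∧
    (∃ α : ℂ, α • u + v ≠ 0 ∧
      (Q * Qᴴ + vecMulVec z (star z)) *ᵥ (α • u + v)
        = (((1 + ν ^ 2 - Real.sqrt (1 + ν ^ 4 + 2 * ν ^ 2 - 4 * ∑ i, ‖v i‖ ^ 2)) / 2 : ℝ) : ℂ)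
            • (α • u + v)) :=
  stmt6_general Q hQ z u v hu hv hu0 hv0 ν hν
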